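/- Let N = (V, A, c) be a network, y, z ∈ V distinct and X ⊆ V. Then δ^N_{yz}(X) ≥ λ^N_{yz}(X), and equality holds when X is a singleton. -/

import Mathlib

/-!
Networks on the complete digraph: capacities `c : V → V → ℕ` with no loops
(arcs are ordered pairs of distinct vertices; loops are given capacity 0).
-/

structure Network (V : Type*) where
  c : V → V → ℕ
  no_loop : ∀ v, c v v = 0

namespace NetFlow

variable {V : Type*} [Fintype V] [DecidableEq V]

/-- `f` is a flow from `y` to `z` in `N`. -/
def IsFlow (N : Network V) (y z : V) (f : V → V → ℕ) : Prop :=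
  (∀ u v, f u v ≤ N.c u v) ∧
  (∀ x, x ≠ y → x ≠ z → ∑ u, f u x = ∑ u, f x u)

/-- The value of a flow from `y`. -/
def flowValue (f : V → V → ℕ) (y : V) : ℤ :=
  (∑ u, (f y u : ℤ)) - ∑ u, (f u y : ℤ)

/-- The maximum flow value `φ^N_{yz}`. -/
noncomputable def maxFlowValue (N : Network V) (y z : V) : ℕ :=
  sSup {m : ℕ | ∃ f, IsFlow N y z f ∧ flowValue f y = (m : ℤ)}

/-- `f` is a maximum flow from `y` to `z` in `N`. -/
def IsMaxFlow (N : Network V) (y z : V) (f : V → V → ℕ) : Prop :=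
  IsFlow N y z f ∧ flowValue f y = (maxFlowValue N y z : ℤ)

/-- The network `N_X`: capacities of arcs incident to `X` are set to zero. -/
def removeVerts (N : Network V) (X : Finset V) : Network V where
  c u v := if u ∈ X ∨ v ∈ X then 0 else N.c u v
  no_loop v := by simp [N.no_loop v]

/-- `φ^N_{yz}(X) = φ^N_{yz} - φ^{N_X}_{yz}`. -/
noncomputable def phiDrop (N : Network V) (y z : V) (X : Finset V) : ℤ :=
  (maxFlowValue N y z : ℤ) - (maxFlowValue (removeVerts N X) y z : ℤ)

/-- The (consecutive) arcs of a list of vertices. -/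
def pathArcs (p : List V) : List (V × V) := p.zip p.tail

/-- `p` is a path from `y` to `z` in `N`: at least two distinct vertices, starting at `y`,
ending at `z`, with all consecutive arcs of positive capacity. -/
def IsPath (N : Network V) (y z : V) (p : List V) : Prop :=
  2 ≤ p.length ∧ p.Nodup ∧ p.head? = some y ∧ p.getLast? = some z ∧
    p.Chain' fun u v => 1 ≤ N.c u v

/-- `p` is a cycle in `N`. -/
def IsCycle (N : Network V) (p : List V) : Prop :=
  3 ≤ p.length ∧ p.dropLast.Nodup ∧ p.head? = p.getLast? ∧
    p.Chain' fun u v => 1 ≤ N.c u v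

/-- A sequence of arc-disjoint paths from `y` to `z` in `N`: each component is a path, and
each arc `a` is used by at most `c a` components. -/
def IsPathSeq (N : Network V) (y z : V) (γ : List (List V)) : Prop :=
  (∀ p ∈ γ, IsPath N y z p) ∧
  ∀ u v : V, γ.countP (fun p => decide ((u, v) ∈ pathArcs p)) ≤ N.c u v

/-- `λ^N_{yz}`: the maximum length of a sequence of arc-disjoint paths from `y` to `z`. -/
noncomputable def maxSeqLen (N : Network V) (y z : V) : ℕ :=
  sSup {m : ℕ | ∃ γ : List (List V), IsPathSeq N y z γ ∧ γ.length = m}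

/-- `M^N_{yz}`: the sequences of arc-disjoint paths from `y` to `z` of maximum length. -/
def MaxSeqs (N : Network V) (y z : V) : Set (List (List V)) :=
  {γ | IsPathSeq N y z γ ∧ γ.length = maxSeqLen N y z}

/-- `l_X(γ)`: the number of components of `γ` having a vertex in `X`. -/
def lX (X : Finset V) (γ : List (List V)) : ℕ :=
  γ.countP fun p => p.any fun x => decide (x ∈ X)

/-- `λ^N_{yz}(X)`: the minimum of `l_X` over maximum-length sequences of arc-disjoint paths. -/
noncomputable def lambdaX (N : Network V) (y z : V) (X : Finset V) : ℕ :=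
  sInf {n : ℕ | ∃ γ ∈ MaxSeqs N y z, lX X γ = n}

/-- The flow through a vertex: `f(x) = Σ_{a exiting x} f(a)` if `x ∉ {y,z}`, `v(f)` otherwise. -/
def vertexFlow (f : V → V → ℕ) (y z x : V) : ℤ :=
  if x = y ∨ x = z then flowValue f y else ∑ u, (f x u : ℤ)

/-- `δ^N_{yz}(X)`: the minimum of `f(X) = Σ_{x∈X} f(x)` over maximum flows `f`. -/
noncomputable def deltaX (N : Network V) (y z : V) (X : Finset V) : ℕ :=
  sInf {n : ℕ | ∃ f, IsMaxFlow N y z f ∧ (∑ x ∈ X, vertexFlow f y z x) = (n : ℤ)}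

/-- The flow `f_γ` associated with a sequence of arc-disjoint paths. -/
def seqFlow (γ : List (List V)) (u v : V) : ℕ :=
  γ.countP fun p => decide ((u, v) ∈ pathArcs p)

/-- The path (or cycle) function `χ_p` of a path or cycle `p`. -/
def chi (p : List V) (u v : V) : ℕ := (pathArcs p).count (u, v)

/-- `(γ, w)` is a decomposition of the flow `f`: `γ` is a sequence of `v(f)` paths from `y`
to `z`, `w` a sequence of cycles, and `f = Σ_j χ_{γ_j} + Σ_j χ_{w_j}`. -/
def IsDecomposition (N : Network V) (y z : V) (f : V → V → ℕ)
    (γ w : List (List V)) : Prop :=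
  (∀ p ∈ γ, IsPath N y z p) ∧ (∀ q ∈ w, IsCycle N q) ∧
  (γ.length : ℤ) = flowValue f y ∧
  ∀ u v : V, f u v = (γ.map fun p => chi p u v).sum + (w.map fun q => chi q u v).sum

/-- The forward arcs of a generalized path given by vertices `p` and directions `d`. -/
def forwardArcs (p : List V) (d : List Bool) : List (V × V) :=
  ((p.zip p.tail).zip d).filterMap fun e => if e.2 then some e.1 else none

/-- The backward arcs of a generalized path given by vertices `p` and directions `d`. -/
def backwardArcs (p : List V) (d : List Bool) : List (V × V) :=
  ((p.zip p.tail).zip d).filterMap fun e => if e.2 then none else some (e.1.2, e.1.1)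

/-- `(p, d)` is a generalized path from `y` to `z`: distinct vertices `x_1 = y, …, x_m = z`
(`m ≥ 2`), the `i`-th arc being `(x_i, x_{i+1})` (forward, `d_i = true`) or `(x_{i+1}, x_i)`
(backward, `d_i = false`). -/
def IsGenPath (y z : V) (p : List V) (d : List Bool) : Prop :=
  2 ≤ p.length ∧ p.Nodup ∧ p.head? = some y ∧ p.getLast? = some z ∧
    d.length + 1 = p.length

/-- `(p, d)` is an augmenting path for `f` from `y` to `z` in `N`. -/
def IsAugPath (N : Network V) (y z : V) (f : V → V → ℕ)
    (p : List V) (d : List Bool) : Prop :=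
  IsGenPath y z p d ∧
  (∀ a ∈ forwardArcs p d, f a.1 a.2 < N.c a.1 a.2) ∧
  (∀ a ∈ backwardArcs p d, 1 ≤ f a.1 a.2)

/-- `χ_σ` for a generalized path `σ = (p, d)`: `+1` on forward arcs, `-1` on backward arcs. -/
def chiGen (p : List V) (d : List Bool) (u v : V) : ℤ :=
  ((forwardArcs p d).count (u, v) : ℤ) - ((backwardArcs p d).count (u, v) : ℤ)

/-- The full flow vitality group centrality measure `φ^N(X)`. -/
noncomputable def phiGC (N : Network V) (X : Finset V) : ℝ :=
  ∑ a ∈ Finset.univ.filter (fun a : V × V => a.1 ≠ a.2 ∧ 0 < maxFlowValue N a.1 a.2),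
    (phiDrop N a.1 a.2 X : ℝ) / (maxFlowValue N a.1 a.2 : ℝ)

/-- The full flow betweenness group centrality measure `λ^N(X)`. -/
noncomputable def lambdaGC (N : Network V) (X : Finset V) : ℝ :=
  ∑ a ∈ Finset.univ.filter (fun a : V × V => a.1 ≠ a.2 ∧ 0 < maxFlowValue N a.1 a.2),
    (lambdaX N a.1 a.2 X : ℝ) / (maxFlowValue N a.1 a.2 : ℝ)

end NetFlow

/-!
Flows and arc-disjoint path sequences correspond: a sequence `γ` of paths from `y` to `z` gives
the flow `f_γ` of value `|γ|` whose throughput at any vertex `x` is `l_{x}(γ)`, and conversely a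
flow of value `k` dominates `f_γ` for some `k` paths `γ`, found one at a time by following arcs of
positive flow from `y` (a cut argument shows they reach `z`). Decomposing a maximum flow `f`
minimizing `f(X)` gives `γ ∈ M` with `l_X(γ) ≤ ∑_{x ∈ X} l_{x}(γ) = ∑_{x ∈ X} f_γ(x) ≤ f(X)`.
For `X = {x}`, the maximum flow `f_γ` of a `γ ∈ M` minimizing `l_{x}` has `f_γ(x) = l_{x}(γ)`.
-/

namespace List

lemma sum_count_pair_left {α β : Type*} [DecidableEq α] [DecidableEq β] [Fintype β]
    (l : List (α × β)) (a : α) : ∑ b, l.count (a, b) = (l.map Prod.fst).count a := by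
  induction l with
  | nil => simp
  | cons e l ih =>
    simp only [List.count_cons, List.map_cons, Finset.sum_add_distrib, ih, beq_iff_eq,
      Prod.ext_iff]
    by_cases h : e.1 = a <;> simp [h, eq_comm]

lemma sum_count_pair_right {α β : Type*} [DecidableEq α] [DecidableEq β] [Fintype α]
    (l : List (α × β)) (b : β) : ∑ a, l.count (a, b) = (l.map Prod.snd).count b := by
  induction l with
  | nil => simp
  | cons e l ih =>
    simp only [List.count_cons, List.map_cons, Finset.sum_add_distrib, ih, beq_iff_eq,
      Prod.ext_iff]
    by_cases h : e.2 = b <;> simp [h, eq_comm]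

lemma exists_nodup_isChain_of_reflTransGen {α : Type*} {r : α → α → Prop} {a b : α}
    (h : Relation.ReflTransGen r a b) :
    ∃ l, (a :: l).Nodup ∧ (a :: l).IsChain r ∧ (a :: l).getLast (cons_ne_nil a l) = b := by
  induction h using Relation.ReflTransGen.head_induction_on with
  | refl => exact ⟨[], nodup_singleton b, .singleton b, rfl⟩
  | @head a c hac _ ih =>
    obtain ⟨l, hnd, hch, hlast⟩ := ih
    by_cases ha : a ∈ c :: l
    · -- shortcut the cycle through `a`
      obtain ⟨s, t, hst⟩ := append_of_mem ha
      have hsuf : a :: t <:+ c :: l := ⟨s, hst.symm⟩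
      refine ⟨t, hnd.sublist hsuf.sublist, hch.suffix hsuf, ?_⟩
      simp_rw [hst, getLast_append_of_ne_nil _ (cons_ne_nil a t)] at hlast
      exact hlast
    · exact ⟨c :: l, nodup_cons.2 ⟨ha, hnd⟩, hch.cons_cons hac, by
        rwa [getLast_cons_cons]⟩

end List

namespace NetFlow

variable {V : Type*}

section Arcs

lemma pathArcs_cons_cons (a b : V) (t : List V) :
    pathArcs (a :: b :: t) = (a, b) :: pathArcs (b :: t) := rfl

lemma map_fst_pathArcs (p : List V) : (pathArcs p).map Prod.fst = p.dropLast := by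
  induction p with
  | nil => rfl
  | cons a t ih =>
    cases t with
    | nil => rfl
    | cons b t => rw [pathArcs_cons_cons, List.map_cons, ih, List.dropLast_cons_cons]

lemma map_snd_pathArcs (p : List V) : (pathArcs p).map Prod.snd = p.tail :=
  List.map_snd_zip (by simp)

lemma nodup_pathArcs {p : List V} (hp : p.Nodup) : (pathArcs p).Nodup :=
  .of_map Prod.fst (by rw [map_fst_pathArcs]; exact hp.sublist (List.dropLast_sublist p))

lemma rel_of_mem_pathArcs {r : V → V → Prop} {p : List V} (hp : p.IsChain r) {a : V × V}
    (ha : a ∈ pathArcs p) : r a.1 a.2 := by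
  induction p with
  | nil => simp [pathArcs] at ha
  | cons u t ih =>
    cases t with
    | nil => simp [pathArcs] at ha
    | cons v t =>
      rw [pathArcs_cons_cons, List.mem_cons] at ha
      rcases ha with rfl | ha
      · exact (List.isChain_cons_cons.1 hp).1
      · exact ih (List.isChain_cons_cons.1 hp).2 ha

variable [DecidableEq V]

lemma chi_eq_ite {p : List V} (hp : p.Nodup) (u v : V) :
    chi p u v = if (u, v) ∈ pathArcs p then 1 else 0 :=
  (nodup_pathArcs hp).count

variable [Fintype V]

lemma sum_chi_left (p : List V) (x : V) : ∑ v, chi p x v = p.dropLast.count x := by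
  simp only [chi, List.sum_count_pair_left, map_fst_pathArcs]

lemma sum_chi_right (p : List V) (x : V) : ∑ u, chi p u x = p.tail.count x := by
  simp only [chi, List.sum_count_pair_right, map_snd_pathArcs]

end Arcs

namespace IsPath

variable {N : Network V} {y z : V} {p : List V}

lemma eq_cons (hp : IsPath N y z p) : ∃ t, p = y :: t :=
  List.head?_eq_some_iff.1 hp.2.2.1

lemma eq_concat (hp : IsPath N y z p) : ∃ t, p = t ++ [z] :=
  List.getLast?_eq_some_iff.1 hp.2.2.2.1

lemma head_mem (hp : IsPath N y z p) : y ∈ p := by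
  obtain ⟨t, rfl⟩ := hp.eq_cons; simp

lemma last_mem (hp : IsPath N y z p) : z ∈ p := by
  obtain ⟨t, rfl⟩ := hp.eq_concat; simp

lemma head_not_mem_tail (hp : IsPath N y z p) : y ∉ p.tail := by
  obtain ⟨t, rfl⟩ := hp.eq_cons; exact (List.nodup_cons.1 hp.2.1).1

lemma mem_tail_iff (hp : IsPath N y z p) {x : V} (hx : x ≠ y) : x ∈ p.tail ↔ x ∈ p := by
  obtain ⟨t, rfl⟩ := hp.eq_cons; simp [hx]

lemma mem_dropLast_iff (hp : IsPath N y z p) {x : V} (hx : x ≠ z) :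
    x ∈ p.dropLast ↔ x ∈ p := by
  obtain ⟨t, rfl⟩ := hp.eq_concat; simp [hx]

lemma last_mem_tail (hp : IsPath N y z p) : z ∈ p.tail := by
  have hlen := hp.1
  refine List.mem_of_getLast? ?_
  rw [List.getLast?_tail, if_neg (by omega), hp.2.2.2.1]

lemma ne (hp : IsPath N y z p) : y ≠ z :=
  fun h => hp.head_not_mem_tail (h ▸ hp.last_mem_tail)

variable [DecidableEq V] [Fintype V]

lemma sum_chi_out (hp : IsPath N y z p) {x : V} (hx : x ≠ z) :
    ∑ v, chi p x v = if x ∈ p then 1 else 0 := by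
  rw [sum_chi_left, (hp.2.1.sublist (List.dropLast_sublist p)).count]
  simp only [hp.mem_dropLast_iff hx]

lemma sum_chi_in (hp : IsPath N y z p) {x : V} (hx : x ≠ y) :
    ∑ u, chi p u x = if x ∈ p then 1 else 0 := by
  rw [sum_chi_right, (hp.2.1.sublist (List.tail_sublist p)).count]
  simp only [hp.mem_tail_iff hx]

lemma sum_chi_in_head (hp : IsPath N y z p) : ∑ u, chi p u y = 0 := by
  rw [sum_chi_right, List.count_eq_zero]; exact hp.head_not_mem_tail

lemma flowValue_chi (hp : IsPath N y z p) : flowValue (chi p) y = 1 := by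
  simp only [flowValue, ← Nat.cast_sum, hp.sum_chi_out hp.ne, hp.sum_chi_in_head,
    if_pos hp.head_mem]
  rfl

end IsPath

lemma flowValue_add [Fintype V] (f g : V → V → ℕ) (y : V) :
    flowValue (f + g) y = flowValue f y + flowValue g y := by
  simp only [flowValue, Pi.add_apply, Nat.cast_add, Finset.sum_add_distrib]
  ring

section PathSeq

variable [DecidableEq V]

lemma seqFlow_cons {p : List V} (hp : p.Nodup) (γ : List (List V)) :
    seqFlow (p :: γ) = chi p + seqFlow γ := by
  funext u v
  simp only [seqFlow, List.countP_cons, Pi.add_apply, chi_eq_ite hp, decide_eq_true_eq]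
  omega

lemma lX_singleton_cons (x : V) (p : List V) (γ : List (List V)) :
    lX {x} (p :: γ) = lX {x} γ + if x ∈ p then 1 else 0 := by
  simp [lX, List.countP_cons]

lemma lX_le_sum_lX_singleton (X : Finset V) (γ : List (List V)) :
    lX X γ ≤ ∑ x ∈ X, lX {x} γ := by
  induction γ with
  | nil => simp [lX]
  | cons p γ ih =>
    simp only [lX_singleton_cons, Finset.sum_add_distrib]
    rw [lX, List.countP_cons, ← lX]
    gcongr
    split_ifs with hp
    · obtain ⟨x, hxp, hxX⟩ := by simpa using hp
      simpa [hxp] using Finset.single_le_sum (f := fun w => if w ∈ p then 1 else 0)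
        (fun _ _ => Nat.zero_le _) hxX
    · exact Nat.zero_le _

lemma lX_singleton_eq_length {x : V} {γ : List (List V)} (h : ∀ p ∈ γ, x ∈ p) :
    lX {x} γ = γ.length := by
  simpa [lX, List.countP_eq_length] using h

variable [Fintype V] {N : Network V} {y z : V} {γ : List (List V)}

lemma sum_seqFlow_out (hγ : ∀ p ∈ γ, IsPath N y z p) {x : V} (hx : x ≠ z) :
    ∑ v, seqFlow γ x v = lX {x} γ := by
  induction γ with
  | nil => simp [seqFlow, lX]
  | cons p γ ih =>
    have hp := hγ p List.mem_cons_self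
    simp only [seqFlow_cons hp.2.1, Pi.add_apply, Finset.sum_add_distrib, hp.sum_chi_out hx,
      lX_singleton_cons, ih fun q hq => hγ q (List.mem_cons_of_mem p hq)]
    ring

lemma sum_seqFlow_in (hγ : ∀ p ∈ γ, IsPath N y z p) {x : V} (hx : x ≠ y) :
    ∑ u, seqFlow γ u x = lX {x} γ := by
  induction γ with
  | nil => simp [seqFlow, lX]
  | cons p γ ih =>
    have hp := hγ p List.mem_cons_self
    simp only [seqFlow_cons hp.2.1, Pi.add_apply, Finset.sum_add_distrib, hp.sum_chi_in hx,
      lX_singleton_cons, ih fun q hq => hγ q (List.mem_cons_of_mem p hq)]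
    ring

lemma flowValue_seqFlow (hγ : ∀ p ∈ γ, IsPath N y z p) :
    flowValue (seqFlow γ) y = γ.length := by
  induction γ with
  | nil => simp [seqFlow, flowValue]
  | cons p γ ih =>
    have hp := hγ p List.mem_cons_self
    rw [seqFlow_cons hp.2.1, flowValue_add, hp.flowValue_chi,
      ih fun q hq => hγ q (List.mem_cons_of_mem p hq), List.length_cons]
    push_cast
    ring

lemma isFlow_seqFlow (hγ : IsPathSeq N y z γ) : IsFlow N y z (seqFlow γ) :=
  ⟨hγ.2, fun _ hxy hxz => by rw [sum_seqFlow_in hγ.1 hxy, sum_seqFlow_out hγ.1 hxz]⟩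

lemma vertexFlow_seqFlow (hγ : ∀ p ∈ γ, IsPath N y z p) (x : V) :
    vertexFlow (seqFlow γ) y z x = lX {x} γ := by
  rw [vertexFlow]
  split_ifs with hx
  · rw [flowValue_seqFlow hγ, lX_singleton_eq_length]
    rcases hx with rfl | rfl
    exacts [fun p hp => (hγ p hp).head_mem, fun p hp => (hγ p hp).last_mem]
  · rw [← Nat.cast_sum, sum_seqFlow_out hγ (not_or.1 hx).2]

end PathSeq

section Flows

variable [Fintype V]

lemma sum_netOutflow_eq_cut [DecidableEq V] (f : V → V → ℤ) (S : Finset V) :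
    ∑ x ∈ S, (∑ u, f x u - ∑ u, f u x) =
      ∑ x ∈ S, ∑ u ∈ Sᶜ, f x u - ∑ x ∈ S, ∑ u ∈ Sᶜ, f u x := by
  simp only [← Finset.sum_add_sum_compl S, Finset.sum_sub_distrib, Finset.sum_add_distrib]
  rw [Finset.sum_comm (s := S) (t := S) (f := fun x u => f u x)]
  ring

variable {N : Network V} {y z : V} {f : V → V → ℕ}

lemma IsFlow.flowValue_le (hf : IsFlow N y z f) : flowValue f y ≤ ∑ u, N.c y u := by
  have hout : ∑ u, (f y u : ℤ) ≤ ∑ u, (N.c y u : ℤ) :=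
    Finset.sum_le_sum fun u _ => by exact_mod_cast hf.1 y u
  have hin : 0 ≤ ∑ u, (f u y : ℤ) := Finset.sum_nonneg fun _ _ => by positivity
  push_cast
  rw [flowValue]
  linarith

lemma maxFlowValue_mem :
    maxFlowValue N y z ∈ {m : ℕ | ∃ f, IsFlow N y z f ∧ flowValue f y = m} := by
  refine Nat.sSup_mem ⟨0, fun _ _ => 0, ⟨fun _ _ => Nat.zero_le _, fun _ _ _ => rfl⟩, ?_⟩
    ⟨∑ u, N.c y u, ?_⟩
  · simp [flowValue]
  · rintro m ⟨f, hf, hv⟩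
    exact_mod_cast hv ▸ hf.flowValue_le

lemma exists_isMaxFlow : ∃ f, IsMaxFlow N y z f :=
  maxFlowValue_mem

/-- The set of vertices reachable from `y` along arcs carrying flow has no outgoing flow, so its
net outflow `v(f)` cannot be positive unless it contains `z`. -/
lemma IsFlow.reflTransGen (hf : IsFlow N y z f) (hv : 0 < flowValue f y) :
    Relation.ReflTransGen (fun a b => 0 < f a b) y z := by
  classical
  by_contra hz
  set S := Finset.univ.filter (Relation.ReflTransGen (fun a b => 0 < f a b) y)
  have hyS : y ∈ S := by simp [S, Relation.ReflTransGen.refl]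
  have hnet : ∑ x ∈ S, (∑ u, (f x u : ℤ) - ∑ u, (f u x : ℤ)) = flowValue f y := by
    refine (Finset.sum_eq_single_of_mem y hyS fun x hx hxy => ?_).trans rfl
    have hxz : x ≠ z := by rintro rfl; simp [S, hz] at hx
    rw [← Nat.cast_sum, ← Nat.cast_sum, hf.2 x hxy hxz, sub_self]
  have hcut : ∑ x ∈ S, ∑ u ∈ Sᶜ, (f x u : ℤ) = 0 := by
    refine Finset.sum_eq_zero fun x hx => Finset.sum_eq_zero fun u hu => ?_
    simp only [S, Finset.mem_compl, Finset.mem_filter, Finset.mem_univ, true_and] at hx hu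
    by_contra hxu
    exact hu (hx.tail (by omega))
  have hin : 0 ≤ ∑ x ∈ S, ∑ u ∈ Sᶜ, (f u x : ℤ) :=
    Finset.sum_nonneg fun _ _ => Finset.sum_nonneg fun _ _ => by positivity
  rw [sum_netOutflow_eq_cut (fun u v => (f u v : ℤ)), hcut] at hnet
  linarith

lemma IsFlow.exists_isPath_chi_le [DecidableEq V] (hf : IsFlow N y z f) (hyz : y ≠ z)
    (hv : 0 < flowValue f y) : ∃ p, IsPath N y z p ∧ ∀ u v, chi p u v ≤ f u v := by
  obtain ⟨l, hnd, hch, hlast⟩ := List.exists_nodup_isChain_of_reflTransGen (hf.reflTransGen hv)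
  have hl : l ≠ [] := by rintro rfl; exact hyz hlast
  have hp : IsPath N y z (y :: l) :=
    ⟨by simpa [Nat.one_le_iff_ne_zero] using hl, hnd, rfl,
      by rw [List.getLast?_eq_some_getLast (List.cons_ne_nil y l), hlast],
      hch.imp fun u v h => h.trans_le (hf.1 u v)⟩
  refine ⟨y :: l, hp, fun u v => ?_⟩
  rw [chi_eq_ite hnd]
  split_ifs with huv
  · exact rel_of_mem_pathArcs hch huv
  · exact Nat.zero_le _

lemma IsFlow.sub_chi [DecidableEq V] (hf : IsFlow N y z f) {p : List V} (hp : IsPath N y z p)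
    (hle : ∀ u v, chi p u v ≤ f u v) :
    IsFlow N y z (f - chi p) ∧ flowValue (f - chi p) y + 1 = flowValue f y := by
  have hsplit : f = chi p + (f - chi p) := by
    funext u v; exact (Nat.add_sub_cancel' (hle u v)).symm
  refine ⟨⟨fun u v => (Nat.sub_le _ _).trans (hf.1 u v), fun x hxy hxz => ?_⟩, ?_⟩
  · have hcons := hf.2 x hxy hxz
    rw [hsplit] at hcons
    simp only [Pi.add_apply, Finset.sum_add_distrib, hp.sum_chi_in hxy, hp.sum_chi_out hxz]
      at hcons
    omega
  · conv_rhs => rw [hsplit, flowValue_add, hp.flowValue_chi]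
    ring

lemma IsFlow.exists_pathSeq_le [DecidableEq V] (hyz : y ≠ z) (k : ℕ) (hf : IsFlow N y z f)
    (hv : flowValue f y = k) :
    ∃ γ, (∀ p ∈ γ, IsPath N y z p) ∧ γ.length = k ∧ ∀ u v, seqFlow γ u v ≤ f u v := by
  induction k generalizing f with
  | zero => exact ⟨[], by simp, rfl, fun u v => Nat.zero_le _⟩
  | succ k ih =>
    obtain ⟨p, hp, hle⟩ := hf.exists_isPath_chi_le hyz (by rw [hv]; positivity)
    obtain ⟨hg, hgv⟩ := hf.sub_chi hp hle
    obtain ⟨γ, hγ, hlen, hγle⟩ := ih hg (by push_cast at hv; linarith)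
    refine ⟨p :: γ, List.forall_mem_cons.2 ⟨hp, hγ⟩, by simp [hlen], fun u v => ?_⟩
    calc seqFlow (p :: γ) u v = chi p u v + seqFlow γ u v := by rw [seqFlow_cons hp.2.1]; rfl
      _ ≤ chi p u v + (f u v - chi p u v) := Nat.add_le_add_left (hγle u v) _
      _ = f u v := Nat.add_sub_cancel' (hle u v)

end Flows

section Extremal

variable [DecidableEq V] {N : Network V} {y z : V}

lemma lambdaX_le_lX {γ : List (List V)} (hγ : γ ∈ MaxSeqs N y z) (X : Finset V) :
    lambdaX N y z X ≤ lX X γ :=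
  Nat.sInf_le ⟨γ, hγ, rfl⟩

variable [Fintype V]

lemma vertexFlow_mono {f g : V → V → ℕ} (hle : ∀ u v, g u v ≤ f u v)
    (hv : flowValue g y = flowValue f y) (x : V) : vertexFlow g y z x ≤ vertexFlow f y z x := by
  unfold vertexFlow
  split_ifs
  · exact hv.le
  · exact Finset.sum_le_sum fun u _ => by exact_mod_cast hle x u

lemma IsMaxFlow.vertexFlow_nonneg {f : V → V → ℕ} (hf : IsMaxFlow N y z f) (x : V) :
    0 ≤ vertexFlow f y z x := by
  unfold vertexFlow
  split_ifs
  · rw [hf.2]; positivity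
  · positivity

lemma setOf_flowValue_eq_setOf_length (hyz : y ≠ z) :
    {m : ℕ | ∃ f, IsFlow N y z f ∧ flowValue f y = m} =
      {m | ∃ γ, IsPathSeq N y z γ ∧ γ.length = m} := by
  ext m
  constructor
  · rintro ⟨f, hf, hv⟩
    obtain ⟨γ, hγ, hlen, hle⟩ := hf.exists_pathSeq_le hyz m hv
    exact ⟨γ, ⟨hγ, fun u v => (hle u v).trans (hf.1 u v)⟩, hlen⟩
  · rintro ⟨γ, hγ, rfl⟩
    exact ⟨seqFlow γ, isFlow_seqFlow hγ, flowValue_seqFlow hγ.1⟩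

lemma maxFlowValue_eq_maxSeqLen (hyz : y ≠ z) : maxFlowValue N y z = maxSeqLen N y z := by
  rw [maxFlowValue, maxSeqLen, setOf_flowValue_eq_setOf_length hyz]

lemma exists_mem_maxSeqs (hyz : y ≠ z) : ∃ γ, γ ∈ MaxSeqs N y z := by
  have h := maxFlowValue_mem (N := N) (y := y) (z := z)
  rwa [setOf_flowValue_eq_setOf_length hyz, maxFlowValue_eq_maxSeqLen hyz] at h

lemma exists_lX_eq_lambdaX (hyz : y ≠ z) (X : Finset V) :
    ∃ γ ∈ MaxSeqs N y z, lX X γ = lambdaX N y z X := by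
  obtain ⟨γ, hγ⟩ := exists_mem_maxSeqs (N := N) hyz
  exact Nat.sInf_mem (s := {n | ∃ γ ∈ MaxSeqs N y z, lX X γ = n}) ⟨_, γ, hγ, rfl⟩

lemma exists_sum_vertexFlow_eq_deltaX (X : Finset V) :
    ∃ f, IsMaxFlow N y z f ∧ ∑ x ∈ X, vertexFlow f y z x = deltaX N y z X := by
  obtain ⟨f, hf⟩ := exists_isMaxFlow (N := N) (y := y) (z := z)
  refine Nat.sInf_mem (s := {n : ℕ | ∃ f, IsMaxFlow N y z f ∧ ∑ x ∈ X, vertexFlow f y z x = n})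
    ⟨(∑ x ∈ X, vertexFlow f y z x).toNat, f, hf, ?_⟩
  rw [Int.toNat_of_nonneg (Finset.sum_nonneg fun x _ => hf.vertexFlow_nonneg x)]

lemma deltaX_le {f : V → V → ℕ} (hf : IsMaxFlow N y z f) {X : Finset V} {n : ℕ}
    (h : ∑ x ∈ X, vertexFlow f y z x = n) : deltaX N y z X ≤ n :=
  Nat.sInf_le ⟨f, hf, h⟩

lemma lambdaX_le_deltaX (hyz : y ≠ z) (X : Finset V) : lambdaX N y z X ≤ deltaX N y z X := by
  obtain ⟨f, hf, hfX⟩ := exists_sum_vertexFlow_eq_deltaX (N := N) (y := y) (z := z) X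
  obtain ⟨γ, hγ, hlen, hle⟩ := hf.1.exists_pathSeq_le hyz _ hf.2
  have hγmax : γ ∈ MaxSeqs N y z :=
    ⟨⟨hγ, fun u v => (hle u v).trans (hf.1.1 u v)⟩, hlen.trans (maxFlowValue_eq_maxSeqLen hyz)⟩
  have hval : flowValue (seqFlow γ) y = flowValue f y := by rw [flowValue_seqFlow hγ, hlen, hf.2]
  have hlX : (lX X γ : ℤ) ≤ deltaX N y z X :=
    calc (lX X γ : ℤ) ≤ ∑ x ∈ X, (lX {x} γ : ℤ) := by exact_mod_cast lX_le_sum_lX_singleton X γ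
      _ = ∑ x ∈ X, vertexFlow (seqFlow γ) y z x := by simp only [vertexFlow_seqFlow hγ]
      _ ≤ ∑ x ∈ X, vertexFlow f y z x :=
        Finset.sum_le_sum fun x _ => vertexFlow_mono hle hval x
      _ = deltaX N y z X := hfX
  exact (lambdaX_le_lX hγmax X).trans (by exact_mod_cast hlX)

lemma deltaX_singleton_le_lambdaX (hyz : y ≠ z) (x : V) :
    deltaX N y z {x} ≤ lambdaX N y z {x} := by
  obtain ⟨γ, hγ, hγx⟩ := exists_lX_eq_lambdaX (N := N) hyz {x}
  have hmax : IsMaxFlow N y z (seqFlow γ) :=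
    ⟨isFlow_seqFlow hγ.1, by rw [flowValue_seqFlow hγ.1.1, hγ.2, maxFlowValue_eq_maxSeqLen hyz]⟩
  exact deltaX_le hmax (by rw [Finset.sum_singleton, vertexFlow_seqFlow hγ.1.1, hγx])

end Extremal

end NetFlow

theorem delta_ge_lambda_general {V : Type*} [Fintype V] [DecidableEq V]
    (N : Network V) (y z : V) (hyz : y ≠ z) (X : Finset V) :
    NetFlow.lambdaX N y z X ≤ NetFlow.deltaX N y z X ∧
      ∀ x : V, X = {x} → NetFlow.deltaX N y z X = NetFlow.lambdaX N y z X := by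
  refine ⟨NetFlow.lambdaX_le_deltaX hyz X, ?_⟩
  rintro x rfl
  exact (NetFlow.deltaX_singleton_le_lambdaX hyz x).antisymm (NetFlow.lambdaX_le_deltaX hyz {x})

/-- `δ^N_{yz}(X) ≥ λ^N_{yz}(X)`, with equality when `X` is a singleton. -/
theorem delta_ge_lambda {V : Type*} [Fintype V] [DecidableEq V]
    (hV : 2 ≤ Fintype.card V) (N : Network V) (y z : V) (hyz : y ≠ z) (X : Finset V) :
    NetFlow.lambdaX N y z X ≤ NetFlow.deltaX N y z X ∧
      ∀ x : V, X = {x} → NetFlow.deltaX N y z X = NetFlow.lambdaX N y z X :=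
  delta_ge_lambda_general N y z hyz X
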